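/- In the graph obtained from K7 by deleting two nonadjacent edges v1v2 and v3v4 and then performing a Δ-Y exchange on the triangle {v1, v3, v6} (adding new vertex v8 of degree 3), there is no K_{4,4}-e minor: any candidate bipartition in which v8 plays the role of the degree-3 vertex forces the five vertices v1, v2, v3, v4, v6 to lie in a common part of size four, a contradiction. -/

import Mathlib

open SimpleGraph

/-- `H` is a minor of `G`: branch-set formulation. -/
def IsMinor {W V : Type*} (H : SimpleGraph W) (G : SimpleGraph V) : Prop :=
  ∃ ρ : W → Set V,
    (∀ w, (ρ w).Nonempty) ∧
    (∀ w, (G.induce (ρ w)).Connected) ∧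
    (Pairwise fun w w' => Disjoint (ρ w) (ρ w')) ∧
    ∀ ⦃w w'⦄, H.Adj w w' → ∃ a ∈ ρ w, ∃ b ∈ ρ w', G.Adj a b

/-- Δ-Y exchange on the triangle `v₁ v₂ v₃`. -/
def deltaY {V : Type*} (G : SimpleGraph V) (v₁ v₂ v₃ : V) : SimpleGraph (V ⊕ Unit) where
  Adj x y :=
    match x, y with
    | .inl a, .inl b => G.Adj a b ∧ s(a, b) ∉ ({s(v₁, v₂), s(v₂, v₃), s(v₁, v₃)} : Set (Sym2 V))
    | .inl a, .inr _ => a = v₁ ∨ a = v₂ ∨ a = v₃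
    | .inr _, .inl a => a = v₁ ∨ a = v₂ ∨ a = v₃
    | .inr _, .inr _ => False
  symm := by
    constructor
    rintro (a | a) (b | b) h
    · exact ⟨h.1.symm, by rw [show s(b, a) = s(a, b) from Sym2.eq_swap]; exact h.2⟩
    · exact h
    · exact h
    · exact h
  loopless := by
    constructor
    rintro (a | a) h
    · exact (G.ne_of_adj h.1) rfl
    · exact h

/-- `K_{4,4}` minus an edge (the edge between `inl 0` and `inr 0`). -/
def K44e : SimpleGraph (Fin 4 ⊕ Fin 4) where
  Adj x y :=
    match x, y with
    | .inl i, .inr j => ¬(i = 0 ∧ j = 0)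
    | .inr j, .inl i => ¬(i = 0 ∧ j = 0)
    | _, _ => False
  symm := by constructor; rintro (i | i) (j | j) h <;> exact h
  loopless := by constructor; rintro (i | i) h <;> exact h

/-- Vertices `0,…,6` stand for `v₁,…,v₇`.  `G` is `K₇` minus the nonadjacent edges
`v₁v₂`, `v₃v₄`; the Δ-Y exchange is performed on the triangle `{v₁, v₃, v₆}`,
adding a new degree-3 vertex `v₈ = Sum.inr ()`. -/
def G₅ : SimpleGraph (Fin 7) := (⊤ : SimpleGraph (Fin 7)).deleteEdges {s(0, 1), s(2, 3)}

def G₅' : SimpleGraph (Fin 7 ⊕ Unit) := deltaY G₅ 0 2 5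

/-!
An 8-vertex minor of an 8-vertex graph is a subgraph: all branch sets are singletons. So a
copy `f` of `K_{4,4} - e` in `G₅'` sends some vertex `c` to the new vertex `v₈`, whose
neighbours are `v₁, v₃, v₆`. As `f` cannot decrease degrees, `c` is one of the two degree-3
vertices of `K_{4,4} - e` and `f` maps its neighbourhood onto `{v₁, v₃, v₆}`. The whole side of
`c`, four vertices, consists of common neighbours of that neighbourhood, so it is mapped
injectively into the common neighbours of `v₁, v₃, v₆` in `G₅'`. Because the edges `v₁v₂` and
`v₃v₄` are missing, these are only `v₅, v₇, v₈`.
-/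

open Finset

theorem IsMinor.isContained_of_card_le {W V : Type*} [Fintype W] [Fintype V]
    {H : SimpleGraph W} {G : SimpleGraph V} (h : IsMinor H G)
    (hcard : Fintype.card V ≤ Fintype.card W) : H ⊑ G := by
  obtain ⟨ρ, hne, -, hdisj, hadj⟩ := h
  choose g hg using hne
  have hinj : Function.Injective g := fun w w' hww' =>
    by_contra fun hne => Set.disjoint_left.mp (hdisj hne) (hg w) (hww' ▸ hg w')
  have hsurj : Function.Surjective g :=
    ((Fintype.bijective_iff_injective_and_card g).2
      ⟨hinj, le_antisymm (Fintype.card_le_of_injective g hinj) hcard⟩).2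
  have hsingleton : ∀ w, ∀ x ∈ ρ w, x = g w := by
    intro w x hx
    obtain ⟨w', rfl⟩ := hsurj x
    obtain rfl : w = w' := by_contra fun hne => Set.disjoint_left.mp (hdisj hne) hx (hg w')
    rfl
  refine ⟨⟨⟨g, fun {w w'} hww' => ?_⟩, hinj⟩⟩
  obtain ⟨a, ha, b, hb, hab⟩ := hadj hww'
  rwa [hsingleton w a ha, hsingleton w' b hb] at hab

namespace SimpleGraph

variable {V W : Type*}

instance [DecidableEq V] (G : SimpleGraph V) [DecidableRel G.Adj] (v₁ v₂ v₃ : V) :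
    DecidableRel (deltaY G v₁ v₂ v₃).Adj
  | .inl a, .inl b => decidable_of_iff
      (G.Adj a b ∧ s(a, b) ≠ s(v₁, v₂) ∧ s(a, b) ≠ s(v₂, v₃) ∧ s(a, b) ≠ s(v₁, v₃))
      (by simp [deltaY])
  | .inl a, .inr _ => inferInstanceAs (Decidable (a = v₁ ∨ a = v₂ ∨ a = v₃))
  | .inr _, .inl a => inferInstanceAs (Decidable (a = v₁ ∨ a = v₂ ∨ a = v₃))
  | .inr _, .inr _ => isFalse id

section CommonNeighbors

variable [Fintype V] (G : SimpleGraph V) [DecidableRel G.Adj]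

def commonNeighborFinset (s : Finset V) : Finset V := {x | ∀ y ∈ s, G.Adj x y}

variable {G} in
@[simp]
theorem mem_commonNeighborFinset {s : Finset V} {x : V} :
    x ∈ G.commonNeighborFinset s ↔ ∀ y ∈ s, G.Adj x y := by
  simp [commonNeighborFinset]

end CommonNeighbors

namespace Copy

variable [Fintype V] [Fintype W] {G : SimpleGraph V} {H : SimpleGraph W}
  [DecidableRel G.Adj] [DecidableRel H.Adj] (f : Copy H G)

theorem map_commonNeighborFinset_subset (s : Finset W) :
    (H.commonNeighborFinset s).map f.toEmbedding ⊆
      G.commonNeighborFinset (s.map f.toEmbedding) := by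
  intro x hx
  obtain ⟨w, hw, rfl⟩ := mem_map.1 hx
  simp only [mem_commonNeighborFinset, mem_map, forall_exists_index, and_imp,
    forall_apply_eq_imp_iff₂] at hw ⊢
  exact fun y hy => f.toHom.map_adj (hw y hy)

theorem map_neighborFinset_eq_of_degree_le {w : W} (h : G.degree (f w) ≤ H.degree w) :
    (H.neighborFinset w).map f.toEmbedding = G.neighborFinset (f w) := by
  refine eq_of_subset_of_card_le (fun x hx => ?_) (by simpa using h)
  obtain ⟨y, hy, rfl⟩ := mem_map.1 hx
  exact (mem_neighborFinset _ _ _).2 (f.toHom.map_adj ((mem_neighborFinset _ _ _).1 hy))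

theorem card_commonNeighborFinset_neighborFinset_le {w : W}
    (h : G.degree (f w) ≤ H.degree w) :
    #(H.commonNeighborFinset (H.neighborFinset w)) ≤
      #(G.commonNeighborFinset (G.neighborFinset (f w))) := by
  rw [← f.map_neighborFinset_eq_of_degree_le h, ← card_map f.toEmbedding]
  exact card_le_card (f.map_commonNeighborFinset_subset _)

end Copy

end SimpleGraph

instance : DecidableRel K44e.Adj
  | .inl i, .inr j => inferInstanceAs (Decidable ¬(i = 0 ∧ j = 0))
  | .inr j, .inl i => inferInstanceAs (Decidable ¬(i = 0 ∧ j = 0))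
  | .inl _, .inl _ => isFalse id
  | .inr _, .inr _ => isFalse id

theorem K44e_three_le_degree (c : Fin 4 ⊕ Fin 4) : 3 ≤ K44e.degree c := by
  revert c; decide

theorem K44e_card_commonNeighborFinset_neighborFinset_of_degree_eq_three (c : Fin 4 ⊕ Fin 4)
    (hc : K44e.degree c = 3) : #(K44e.commonNeighborFinset (K44e.neighborFinset c)) = 4 := by
  revert c; decide

instance : DecidableRel G₅.Adj :=
  inferInstanceAs (DecidableRel ((⊤ : SimpleGraph (Fin 7)).deleteEdges {s(0, 1), s(2, 3)}).Adj)

instance : DecidableRel G₅'.Adj := inferInstanceAs (DecidableRel (deltaY G₅ 0 2 5).Adj)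

theorem G₅'_neighborFinset_inr : G₅'.neighborFinset (.inr ()) = {.inl 0, .inl 2, .inl 5} := by
  decide

theorem G₅'_degree_inr : G₅'.degree (.inr ()) = 3 := by
  rw [← card_neighborFinset_eq_degree, G₅'_neighborFinset_inr]
  rfl

theorem G₅'_commonNeighborFinset_inl_0_2_5 :
    G₅'.commonNeighborFinset {.inl 0, .inl 2, .inl 5} = {.inl 4, .inl 6, .inr ()} := by
  decide

/-- there is no `K_{4,4} - e` minor in `G₅'`. -/
theorem K7_minus_nonadjacent_deltaY_two_removed_no_K44e_minor :
    ¬ IsMinor K44e G₅' := by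
  intro hminor
  obtain ⟨f⟩ := hminor.isContained_of_card_le (by simp)
  obtain ⟨c, hc⟩ :=
    ((Fintype.bijective_iff_injective_and_card f).2 ⟨f.injective, by simp⟩).2 (.inr ())
  have hfc : G₅'.degree (f c) = 3 := hc ▸ G₅'_degree_inr
  have hdeg : K44e.degree c = 3 :=
    le_antisymm (hfc ▸ f.degree_le c) (K44e_three_le_degree c)
  have hcard := f.card_commonNeighborFinset_neighborFinset_le (hfc.trans hdeg.symm).le
  rw [K44e_card_commonNeighborFinset_neighborFinset_of_degree_eq_three c hdeg, hc,
    G₅'_neighborFinset_inr, G₅'_commonNeighborFinset_inl_0_2_5] at hcard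
  simp at hcard
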